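/- (Sherman–Morrison–Woodbury formula for the tensor Moore-Penrose inverse.) Let A be a real tensor of size n₁×n₁×n₃ with Moore-Penrose inverse Ap, and B a tensor of size n₂×n₂×n₃ with Moore-Penrose inverse Bp. Let X₁, Y₁, X₂, Y₂ be tensors of size n₁×n₂×n₃ such that: X₁ = A*W₁ for some tensor W₁ of size n₁×n₂×n₃ and Aᵀ*Y₁ = 0; X₂ = Aᵀ*W₂ for some tensor W₂ of size n₁×n₂×n₃ and A*Y₂ = 0. Let G₁ be a Moore-Penrose inverse of Y₁ᵀ*Y₁ and G₂ a Moore-Penrose inverse of Y₂ᵀ*Y₂, and set E₁ = Y₁*G₁ and E₂ = Y₂*G₂. Assume: (i) E₂*Bp*E₁ᵀ*Y₁*B = E₂; (ii) X₁*E₁ᵀ*Y₁*B = X₁*B; (iii) Y₁*E₁ᵀ*Y₁ = Y₁; (iv) B*Y₂ᵀ*E₂*Bp*E₁ᵀ = E₁ᵀ; (v) B*Y₂ᵀ*E₂*X₂ᵀ = B*X₂ᵀ; (vi) E₂*Y₂ᵀ*E₂ = E₂. Set M = A + (X₁+Y₁)*B*(X₂+Y₂)ᵀ and Q = Ap − E₂*X₂ᵀ*Ap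 − Ap*X₁*E₁ᵀ + E₂*(Bp + X₂ᵀ*Ap*X₁)*E₁ᵀ. Then Q is a Moore-Penrose inverse of M, i.e. M*Q*M = M, Q*M*Q = Q, (M*Q)ᵀ = M*Q and (Q*M)ᵀ = Q*M. -/

import Mathlib

open scoped Matrix.Norms.L2Operator

noncomputable section

/-- The t-product of third-order tensors. -/
def tProd {n₁ n₂ n₃ n₄ : ℕ} [NeZero n₃] (A : Fin n₁ → Fin n₂ → ZMod n₃ → ℝ)
    (B : Fin n₂ → Fin n₄ → ZMod n₃ → ℝ) : Fin n₁ → Fin n₄ → ZMod n₃ → ℝ :=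
  fun i j k => ∑ l : Fin n₂, ∑ m : ZMod n₃, A i l (k - m) * B l j m

/-- The Frobenius norm of a third-order tensor. -/
def frobNorm {n₁ n₂ n₃ : ℕ} [NeZero n₃] (A : Fin n₁ → Fin n₂ → ZMod n₃ → ℝ) : ℝ :=
  Real.sqrt (∑ i : Fin n₁, ∑ j : Fin n₂, ∑ k : ZMod n₃, (A i j k) ^ 2)

/-- The block circulant matrix of a third-order tensor. -/
def bcirc {n₁ n₂ n₃ : ℕ} (A : Fin n₁ → Fin n₂ → ZMod n₃ → ℝ) :
    Matrix (Fin n₁ × ZMod n₃) (Fin n₂ × ZMod n₃) ℝ :=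
  fun p q => A p.1 q.1 (p.2 - q.2)

/-- The spectral norm of a third-order tensor: the L2 operator norm of its
block circulant matrix. -/
def specNorm {n₁ n₂ n₃ : ℕ} [NeZero n₃] (A : Fin n₁ → Fin n₂ → ZMod n₃ → ℝ) : ℝ :=
  ‖bcirc A‖

/-- The identity tensor. -/
def tId (n n₃ : ℕ) : Fin n → Fin n → ZMod n₃ → ℝ :=
  fun i j k => if i = j ∧ k = 0 then 1 else 0

/-- The tensor transpose. -/
def tTrans {n₁ n₂ n₃ : ℕ} (A : Fin n₁ → Fin n₂ → ZMod n₃ → ℝ) :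
    Fin n₂ → Fin n₁ → ZMod n₃ → ℝ :=
  fun i j k => A j i (-k)

/-- `X` is a Moore-Penrose inverse of `A`. -/
def IsMPInv {n₁ n₂ n₃ : ℕ} [NeZero n₃] (A : Fin n₁ → Fin n₂ → ZMod n₃ → ℝ)
    (X : Fin n₂ → Fin n₁ → ZMod n₃ → ℝ) : Prop :=
  tProd (tProd A X) A = A ∧ tProd (tProd X A) X = X ∧
    tTrans (tProd A X) = tProd A X ∧ tTrans (tProd X A) = tProd X A

/-- The `i`-th DFT block of a third-order tensor. -/
def dftBlock {n₁ n₂ n₃ : ℕ} [NeZero n₃] (A : Fin n₁ → Fin n₂ → ZMod n₃ → ℝ) (i : ZMod n₃) :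
    Matrix (Fin n₁) (Fin n₂) ℂ :=
  fun p q => ∑ k : ZMod n₃,
    Complex.exp (-2 * Real.pi * Complex.I * (i.val : ℂ) * (k.val : ℂ) / (n₃ : ℂ)) * (A p q k : ℂ)

end


/-!
The block circulant matrix `bcirc` turns the t-product into the matrix product and the tensor
transpose into the matrix transpose, and it is injective, so it suffices to prove the formula for
matrices. Write `M = A + U B Vᵀ` with `U = X₁ + Y₁`, `V = X₂ + Y₂`, and factor
`Q = (1 - E₂ X₂ᵀ) A⁺ (1 - X₁ E₁ᵀ) + E₂ B⁺ E₁ᵀ`. The range conditions give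
`E₁ᵀ X₁ = 0`, `X₂ᵀ E₂ = 0`, `A⁺ Y₁ = 0` and `Y₂ᵀ A⁺ = 0`; with (i), (ii) resp. (iv), (v) the
factorisation yields `Q U B = E₂` and `B Vᵀ Q = E₁ᵀ`. Hence `M Q = A A⁺ + Y₁ E₁ᵀ` and
`Q M = A⁺ A + E₂ Y₂ᵀ`. Both are symmetric, since `G₁` and `G₂`, Moore-Penrose inverses of
symmetric matrices, are symmetric; and by (iii) resp. (vi) they fix `M` resp. `Q` from the left.
-/

namespace Matrix

variable {R : Type*} [CommRing R] {m n : Type*} [Fintype m] [Fintype n]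

def IsMoorePenroseInv (A : Matrix m n R) (X : Matrix n m R) : Prop :=
  A * X * A = A ∧ X * A * X = X ∧ (A * X)ᵀ = A * X ∧ (X * A)ᵀ = X * A

namespace IsMoorePenroseInv

variable {A : Matrix m n R} {X : Matrix n m R}

theorem transpose (h : IsMoorePenroseInv A X) : IsMoorePenroseInv Aᵀ Xᵀ := by
  obtain ⟨hAXA, hXAX, hAX, hXA⟩ := h
  refine ⟨?_, ?_, ?_, ?_⟩
  · rw [← transpose_mul, ← transpose_mul, ← Matrix.mul_assoc, hAXA]
  · rw [← transpose_mul, ← transpose_mul, ← Matrix.mul_assoc, hXAX]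
  · rw [← transpose_mul, transpose_transpose, hXA]
  · rw [← transpose_mul, transpose_transpose, hAX]

theorem unique {Y : Matrix n m R} (hX : IsMoorePenroseInv A X) (hY : IsMoorePenroseInv A Y) :
    X = Y := by
  obtain ⟨hAXA, hXAX, hAX, hXA⟩ := hX
  obtain ⟨hAYA, hYAY, hAY, hYA⟩ := hY
  have hAX_eq : A * X = A * Y := by
    calc A * X = (A * Y * A * X)ᵀ := by rw [hAYA, hAX]
      _ = (A * X)ᵀ * (A * Y)ᵀ := by rw [← transpose_mul, Matrix.mul_assoc (A * Y)]
      _ = A * Y := by rw [hAX, hAY, ← Matrix.mul_assoc, hAXA]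
  have hXA_eq : X * A = Y * A := by
    calc X * A = (X * (A * Y * A))ᵀ := by rw [hAYA, hXA]
      _ = (Y * A)ᵀ * (X * A)ᵀ := by rw [← transpose_mul, Matrix.mul_assoc, Matrix.mul_assoc]
      _ = Y * A := by rw [hXA, hYA, Matrix.mul_assoc, ← Matrix.mul_assoc A, hAXA]
  rw [← hXAX, hXA_eq, Matrix.mul_assoc, hAX_eq, ← Matrix.mul_assoc, hYAY]

theorem isSymm {A X : Matrix n n R} (h : IsMoorePenroseInv A X) (hA : A.IsSymm) : X.IsSymm := by
  have hT := h.transpose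
  rw [hA.eq] at hT
  exact hT.unique h

theorem isSymm_of_transpose_mul_self {Y : Matrix m n R} {G : Matrix n n R}
    (h : IsMoorePenroseInv (Yᵀ * Y) G) : G.IsSymm :=
  h.isSymm (by rw [IsSymm, transpose_mul, transpose_transpose])

theorem mul_eq_zero_of_transpose_mul_eq_zero {p : Type*} {Y : Matrix m p R}
    (h : IsMoorePenroseInv A X) (hY : Aᵀ * Y = 0) : X * Y = 0 := by
  obtain ⟨-, hXAX, hAX, -⟩ := h
  rw [← hXAX, Matrix.mul_assoc X, ← hAX, transpose_mul, ← Matrix.mul_assoc, Matrix.mul_assoc, hY,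
    Matrix.mul_zero]

theorem transpose_mul_eq_zero_of_mul_eq_zero {p : Type*} {Y : Matrix n p R}
    (h : IsMoorePenroseInv A X) (hY : A * Y = 0) : Yᵀ * X = 0 := by
  have hXY := h.transpose.mul_eq_zero_of_transpose_mul_eq_zero (by rwa [transpose_transpose])
  rw [← transpose_transpose (Yᵀ * X), transpose_mul, transpose_transpose, hXY, transpose_zero]

end IsMoorePenroseInv

section ShermanMorrisonWoodbury

def smwUpdate (A : Matrix m m R) (B : Matrix n n R) (U V : Matrix m n R) : Matrix m m R :=
  A + U * B * Vᵀ

def smwInv (Ap : Matrix m m R) (Bp : Matrix n n R) (X₁ X₂ E₁ E₂ : Matrix m n R) :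
    Matrix m m R :=
  Ap - E₂ * X₂ᵀ * Ap - Ap * X₁ * E₁ᵀ + E₂ * (Bp + X₂ᵀ * Ap * X₁) * E₁ᵀ

variable {A Ap : Matrix m m R} {B Bp : Matrix n n R} {X₁ Y₁ X₂ Y₂ E₁ E₂ : Matrix m n R}

theorem smwInv_eq [DecidableEq m] :
    smwInv Ap Bp X₁ X₂ E₁ E₂ = (1 - E₂ * X₂ᵀ) * Ap * (1 - X₁ * E₁ᵀ) + E₂ * Bp * E₁ᵀ := by
  simp only [smwInv, Matrix.sub_mul, Matrix.mul_sub, Matrix.mul_add, Matrix.add_mul,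
    Matrix.one_mul, Matrix.mul_one, Matrix.mul_assoc]
  abel

theorem one_sub_mul_mul_add_mul [DecidableEq m] (hE₁X₁ : E₁ᵀ * X₁ = 0)
    (h2 : X₁ * E₁ᵀ * Y₁ * B = X₁ * B) :
    (1 - X₁ * E₁ᵀ) * ((X₁ + Y₁) * B) = Y₁ * B := by
  have hX₁E₁X₁ : X₁ * E₁ᵀ * X₁ = 0 := by rw [Matrix.mul_assoc, hE₁X₁, Matrix.mul_zero]
  simp only [Matrix.sub_mul, Matrix.one_mul, Matrix.add_mul, Matrix.mul_add, ← Matrix.mul_assoc,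
    hX₁E₁X₁, h2, Matrix.zero_mul]
  abel

theorem mul_transpose_add_mul_one_sub [DecidableEq m] (hX₂E₂ : X₂ᵀ * E₂ = 0)
    (h5 : B * Y₂ᵀ * E₂ * X₂ᵀ = B * X₂ᵀ) :
    B * (X₂ + Y₂)ᵀ * (1 - E₂ * X₂ᵀ) = B * Y₂ᵀ := by
  have hBX₂E₂ : B * X₂ᵀ * E₂ = 0 := by rw [Matrix.mul_assoc, hX₂E₂, Matrix.mul_zero]
  simp only [Matrix.mul_sub, Matrix.mul_one, transpose_add, Matrix.mul_add, Matrix.add_mul,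
    ← Matrix.mul_assoc, hBX₂E₂, h5, zero_add]
  abel

theorem smwInv_mul_add_mul (hE₁X₁ : E₁ᵀ * X₁ = 0) (hApY₁ : Ap * Y₁ = 0)
    (h1 : E₂ * Bp * E₁ᵀ * Y₁ * B = E₂) (h2 : X₁ * E₁ᵀ * Y₁ * B = X₁ * B) :
    smwInv Ap Bp X₁ X₂ E₁ E₂ * ((X₁ + Y₁) * B) = E₂ := by
  classical
  have hE₁ : E₁ᵀ * ((X₁ + Y₁) * B) = E₁ᵀ * Y₁ * B := by
    rw [← Matrix.mul_assoc, Matrix.mul_add, hE₁X₁, zero_add]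
  calc smwInv Ap Bp X₁ X₂ E₁ E₂ * ((X₁ + Y₁) * B)
      = (1 - E₂ * X₂ᵀ) * Ap * ((1 - X₁ * E₁ᵀ) * ((X₁ + Y₁) * B)) +
          E₂ * Bp * (E₁ᵀ * ((X₁ + Y₁) * B)) := by
        rw [smwInv_eq, Matrix.add_mul, Matrix.mul_assoc _ (1 - X₁ * E₁ᵀ), Matrix.mul_assoc _ E₁ᵀ]
    _ = (1 - E₂ * X₂ᵀ) * (Ap * Y₁) * B + E₂ * Bp * E₁ᵀ * Y₁ * B := by
        rw [one_sub_mul_mul_add_mul hE₁X₁ h2, hE₁]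
        simp only [Matrix.mul_assoc]
    _ = E₂ := by rw [hApY₁, Matrix.mul_zero, Matrix.zero_mul, zero_add, h1]

theorem mul_transpose_add_mul_smwInv (hX₂E₂ : X₂ᵀ * E₂ = 0) (hY₂Ap : Y₂ᵀ * Ap = 0)
    (h4 : B * Y₂ᵀ * E₂ * Bp * E₁ᵀ = E₁ᵀ) (h5 : B * Y₂ᵀ * E₂ * X₂ᵀ = B * X₂ᵀ) :
    B * (X₂ + Y₂)ᵀ * smwInv Ap Bp X₁ X₂ E₁ E₂ = E₁ᵀ := by
  classical
  have hE₂ : B * (X₂ + Y₂)ᵀ * E₂ = B * Y₂ᵀ * E₂ := by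
    rw [Matrix.mul_assoc, transpose_add, Matrix.add_mul, hX₂E₂, zero_add, Matrix.mul_assoc]
  calc B * (X₂ + Y₂)ᵀ * smwInv Ap Bp X₁ X₂ E₁ E₂
      = B * (X₂ + Y₂)ᵀ * (1 - E₂ * X₂ᵀ) * Ap * (1 - X₁ * E₁ᵀ) +
          B * (X₂ + Y₂)ᵀ * E₂ * Bp * E₁ᵀ := by
        rw [smwInv_eq, Matrix.mul_add]
        simp only [Matrix.mul_assoc]
    _ = B * (Y₂ᵀ * Ap) * (1 - X₁ * E₁ᵀ) + B * Y₂ᵀ * E₂ * Bp * E₁ᵀ := by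
        rw [mul_transpose_add_mul_one_sub hX₂E₂ h5, hE₂, Matrix.mul_assoc B]
    _ = E₁ᵀ := by rw [hY₂Ap, Matrix.mul_zero, Matrix.zero_mul, zero_add, h4]

theorem mul_smwInv (hAApX₁ : A * Ap * X₁ = X₁) (hAE₂ : A * E₂ = 0) :
    A * smwInv Ap Bp X₁ X₂ E₁ E₂ = A * Ap - X₁ * E₁ᵀ := by
  simp only [smwInv, Matrix.mul_add, Matrix.mul_sub, Matrix.add_mul, ← Matrix.mul_assoc, hAE₂,
    hAApX₁, Matrix.zero_mul, sub_zero, add_zero]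

theorem smwInv_mul (hX₂ApA : X₂ᵀ * Ap * A = X₂ᵀ) (hE₁A : E₁ᵀ * A = 0) :
    smwInv Ap Bp X₁ X₂ E₁ E₂ * A = Ap * A - E₂ * X₂ᵀ := by
  rw [Matrix.mul_assoc] at hX₂ApA
  simp only [smwInv, Matrix.add_mul, Matrix.sub_mul, Matrix.mul_add, Matrix.mul_assoc, hE₁A,
    hX₂ApA, Matrix.mul_zero, sub_zero, add_zero]

theorem smwUpdate_mul_smwInv (hAApX₁ : A * Ap * X₁ = X₁) (hAE₂ : A * E₂ = 0)
    (hX₂E₂ : X₂ᵀ * E₂ = 0) (hY₂Ap : Y₂ᵀ * Ap = 0)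
    (h4 : B * Y₂ᵀ * E₂ * Bp * E₁ᵀ = E₁ᵀ) (h5 : B * Y₂ᵀ * E₂ * X₂ᵀ = B * X₂ᵀ) :
    smwUpdate A B (X₁ + Y₁) (X₂ + Y₂) * smwInv Ap Bp X₁ X₂ E₁ E₂ = A * Ap + Y₁ * E₁ᵀ := by
  rw [smwUpdate, Matrix.add_mul, mul_smwInv hAApX₁ hAE₂, Matrix.mul_assoc (X₁ + Y₁) B,
    Matrix.mul_assoc (X₁ + Y₁), mul_transpose_add_mul_smwInv hX₂E₂ hY₂Ap h4 h5, Matrix.add_mul]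
  abel

theorem smwInv_mul_smwUpdate (hX₂ApA : X₂ᵀ * Ap * A = X₂ᵀ) (hE₁A : E₁ᵀ * A = 0)
    (hE₁X₁ : E₁ᵀ * X₁ = 0) (hApY₁ : Ap * Y₁ = 0)
    (h1 : E₂ * Bp * E₁ᵀ * Y₁ * B = E₂) (h2 : X₁ * E₁ᵀ * Y₁ * B = X₁ * B) :
    smwInv Ap Bp X₁ X₂ E₁ E₂ * smwUpdate A B (X₁ + Y₁) (X₂ + Y₂) = Ap * A + E₂ * Y₂ᵀ := by
  rw [smwUpdate, Matrix.mul_add, smwInv_mul hX₂ApA hE₁A, ← Matrix.mul_assoc _ ((X₁ + Y₁) * B),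
    smwInv_mul_add_mul hE₁X₁ hApY₁ h1 h2, transpose_add, Matrix.mul_add]
  abel

theorem mul_smwUpdate_of_mul_eq {P : Matrix m m R} {U V : Matrix m n R} (hA : P * A = A)
    (hU : P * U = U) : P * smwUpdate A B U V = smwUpdate A B U V := by
  rw [smwUpdate, Matrix.mul_add, hA, ← Matrix.mul_assoc, ← Matrix.mul_assoc, hU]

theorem mul_smwInv_of_mul_eq {P : Matrix m m R} (hAp : P * Ap = Ap) (hE₂ : P * E₂ = E₂) :
    P * smwInv Ap Bp X₁ X₂ E₁ E₂ = smwInv Ap Bp X₁ X₂ E₁ E₂ := by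
  simp only [smwInv, Matrix.mul_add, Matrix.mul_sub, ← Matrix.mul_assoc, hAp, hE₂]

theorem isSymm_mul_transpose_mul {p : Type*} {G : Matrix n n R} (hG : G.IsSymm)
    (Y : Matrix p n R) :
    (Y * (Y * G)ᵀ).IsSymm := by
  rw [IsSymm, transpose_mul, transpose_transpose, transpose_mul, hG.eq, Matrix.mul_assoc]

theorem isSymm_mul_mul_transpose {p : Type*} {G : Matrix n n R} (hG : G.IsSymm)
    (Y : Matrix p n R) :
    (Y * G * Yᵀ).IsSymm := by
  rw [IsSymm, transpose_mul, transpose_transpose, transpose_mul, hG.eq, Matrix.mul_assoc]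

theorem isMoorePenroseInv_smwInv {G₁ G₂ : Matrix n n R} (hAp : IsMoorePenroseInv A Ap)
    (hX₁ : ∃ W₁ : Matrix m n R, X₁ = A * W₁) (hY₁ : Aᵀ * Y₁ = 0)
    (hX₂ : ∃ W₂ : Matrix m n R, X₂ = Aᵀ * W₂) (hY₂ : A * Y₂ = 0)
    (hG₁ : G₁.IsSymm) (hG₂ : G₂.IsSymm) (hE₁ : E₁ = Y₁ * G₁) (hE₂ : E₂ = Y₂ * G₂)
    (h1 : E₂ * Bp * E₁ᵀ * Y₁ * B = E₂) (h2 : X₁ * E₁ᵀ * Y₁ * B = X₁ * B)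
    (h3 : Y₁ * E₁ᵀ * Y₁ = Y₁) (h4 : B * Y₂ᵀ * E₂ * Bp * E₁ᵀ = E₁ᵀ)
    (h5 : B * Y₂ᵀ * E₂ * X₂ᵀ = B * X₂ᵀ) (h6 : E₂ * Y₂ᵀ * E₂ = E₂) :
    IsMoorePenroseInv (smwUpdate A B (X₁ + Y₁) (X₂ + Y₂)) (smwInv Ap Bp X₁ X₂ E₁ E₂) := by
  obtain ⟨W₁, rfl⟩ := hX₁
  obtain ⟨W₂, rfl⟩ := hX₂
  have hApY₁ : Ap * Y₁ = 0 := hAp.mul_eq_zero_of_transpose_mul_eq_zero hY₁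
  have hY₂Ap : Y₂ᵀ * Ap = 0 := hAp.transpose_mul_eq_zero_of_mul_eq_zero hY₂
  have hE₁A : E₁ᵀ * A = 0 := by
    rw [hE₁, transpose_mul, Matrix.mul_assoc, ← transpose_transpose A, ← transpose_mul, hY₁,
      transpose_zero, Matrix.mul_zero]
  have hAE₂ : A * E₂ = 0 := by rw [hE₂, ← Matrix.mul_assoc, hY₂, Matrix.zero_mul]
  have hE₁X₁ : E₁ᵀ * (A * W₁) = 0 := by rw [← Matrix.mul_assoc, hE₁A, Matrix.zero_mul]
  have hX₂E₂ : (Aᵀ * W₂)ᵀ * E₂ = 0 := by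
    rw [transpose_mul, transpose_transpose, Matrix.mul_assoc, hAE₂, Matrix.mul_zero]
  have hAApX₁ : A * Ap * (A * W₁) = A * W₁ := by rw [← Matrix.mul_assoc, hAp.1]
  have hX₂ApA : (Aᵀ * W₂)ᵀ * Ap * A = (Aᵀ * W₂)ᵀ := by
    rw [transpose_mul, transpose_transpose, Matrix.mul_assoc, Matrix.mul_assoc,
      ← Matrix.mul_assoc A, hAp.1]
  refine ⟨?_, ?_, ?_, ?_⟩
  · rw [smwUpdate_mul_smwInv hAApX₁ hAE₂ hX₂E₂ hY₂Ap h4 h5]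
    refine mul_smwUpdate_of_mul_eq ?_ ?_
    · rw [Matrix.add_mul, hAp.1, Matrix.mul_assoc Y₁, hE₁A, Matrix.mul_zero, add_zero]
    · rw [Matrix.add_mul, Matrix.mul_add, Matrix.mul_add, hAApX₁, h3, Matrix.mul_assoc A,
        hApY₁, Matrix.mul_assoc Y₁, hE₁X₁, Matrix.mul_zero, Matrix.mul_zero, add_zero, zero_add]
  · rw [smwInv_mul_smwUpdate hX₂ApA hE₁A hE₁X₁ hApY₁ h1 h2]
    refine mul_smwInv_of_mul_eq ?_ ?_
    · rw [Matrix.add_mul, hAp.2.1, Matrix.mul_assoc E₂, hY₂Ap, Matrix.mul_zero, add_zero]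
    · rw [Matrix.add_mul, h6, Matrix.mul_assoc Ap, hAE₂, Matrix.mul_zero, zero_add]
  · rw [smwUpdate_mul_smwInv hAApX₁ hAE₂ hX₂E₂ hY₂Ap h4 h5]
    exact IsSymm.add hAp.2.2.1 (hE₁ ▸ isSymm_mul_transpose_mul hG₁ Y₁)
  · rw [smwInv_mul_smwUpdate hX₂ApA hE₁A hE₁X₁ hApY₁ h1 h2]
    exact IsSymm.add hAp.2.2.2 (hE₂ ▸ isSymm_mul_mul_transpose hG₂ Y₂)

end ShermanMorrisonWoodbury

end Matrix

section BlockCirculant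

open scoped Matrix

variable {n₁ n₂ n₃ n₄ : ℕ}

theorem bcirc_tProd [NeZero n₃] (A : Fin n₁ → Fin n₂ → ZMod n₃ → ℝ)
    (B : Fin n₂ → Fin n₄ → ZMod n₃ → ℝ) : bcirc (tProd A B) = bcirc A * bcirc B := by
  ext ⟨i, k⟩ ⟨j, k'⟩
  simp only [bcirc, tProd, Matrix.mul_apply, Fintype.sum_prod_type]
  refine Finset.sum_congr rfl fun l _ => ?_
  rw [← Equiv.sum_comp (Equiv.addRight k') (fun m => A i l (k - m) * B l j (m - k'))]
  refine Finset.sum_congr rfl fun m _ => ?_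
  rw [Equiv.coe_addRight, add_sub_cancel_right, sub_add_eq_sub_sub, sub_right_comm]

theorem bcirc_tTrans (A : Fin n₁ → Fin n₂ → ZMod n₃ → ℝ) : bcirc (tTrans A) = (bcirc A)ᵀ := by
  ext ⟨i, k⟩ ⟨j, k'⟩
  simp only [bcirc, tTrans, Matrix.transpose_apply, neg_sub]

theorem bcirc_add (A B : Fin n₁ → Fin n₂ → ZMod n₃ → ℝ) : bcirc (A + B) = bcirc A + bcirc B :=
  rfl

theorem bcirc_sub (A B : Fin n₁ → Fin n₂ → ZMod n₃ → ℝ) : bcirc (A - B) = bcirc A - bcirc B :=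
  rfl

theorem bcirc_zero : bcirc (0 : Fin n₁ → Fin n₂ → ZMod n₃ → ℝ) = 0 :=
  rfl

theorem bcirc_injective : Function.Injective (bcirc : (Fin n₁ → Fin n₂ → ZMod n₃ → ℝ) → _) := by
  intro A B h
  funext i j k
  simpa [bcirc] using congrFun (congrFun h (i, k)) (j, 0)

theorem isMPInv_iff_bcirc [NeZero n₃] (A : Fin n₁ → Fin n₂ → ZMod n₃ → ℝ)
    (X : Fin n₂ → Fin n₁ → ZMod n₃ → ℝ) :
    IsMPInv A X ↔ Matrix.IsMoorePenroseInv (bcirc A) (bcirc X) := by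
  simp only [IsMPInv, Matrix.IsMoorePenroseInv, ← bcirc_injective.eq_iff, bcirc_tProd,
    bcirc_tTrans]

end BlockCirculant

theorem smw_formula_mp_inverse_general (n₁ n₂ n₃ : ℕ) [NeZero n₃]
    (A : Fin n₁ → Fin n₁ → ZMod n₃ → ℝ) (Ap : Fin n₁ → Fin n₁ → ZMod n₃ → ℝ)
    (B : Fin n₂ → Fin n₂ → ZMod n₃ → ℝ) (Bp : Fin n₂ → Fin n₂ → ZMod n₃ → ℝ)
    (X₁ Y₁ X₂ Y₂ : Fin n₁ → Fin n₂ → ZMod n₃ → ℝ)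
    (G₁ G₂ : Fin n₂ → Fin n₂ → ZMod n₃ → ℝ)
    (hAp : IsMPInv A Ap)
    (hX₁ : ∃ W₁ : Fin n₁ → Fin n₂ → ZMod n₃ → ℝ, X₁ = tProd A W₁)
    (hY₁ : tProd (tTrans A) Y₁ = 0)
    (hX₂ : ∃ W₂ : Fin n₁ → Fin n₂ → ZMod n₃ → ℝ, X₂ = tProd (tTrans A) W₂)
    (hY₂ : tProd A Y₂ = 0)
    (hG₁ : IsMPInv (tProd (tTrans Y₁) Y₁) G₁)
    (hG₂ : IsMPInv (tProd (tTrans Y₂) Y₂) G₂)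
    (E₁ E₂ : Fin n₁ → Fin n₂ → ZMod n₃ → ℝ)
    (hE₁ : E₁ = tProd Y₁ G₁) (hE₂ : E₂ = tProd Y₂ G₂)
    (h1 : tProd (tProd (tProd (tProd E₂ Bp) (tTrans E₁)) Y₁) B = E₂)
    (h2 : tProd (tProd (tProd X₁ (tTrans E₁)) Y₁) B = tProd X₁ B)
    (h3 : tProd (tProd Y₁ (tTrans E₁)) Y₁ = Y₁)
    (h4 : tProd (tProd (tProd (tProd B (tTrans Y₂)) E₂) Bp) (tTrans E₁) = tTrans E₁)
    (h5 : tProd (tProd (tProd B (tTrans Y₂)) E₂) (tTrans X₂) = tProd B (tTrans X₂))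
    (h6 : tProd (tProd E₂ (tTrans Y₂)) E₂ = E₂) :
    IsMPInv (A + tProd (tProd (X₁ + Y₁) B) (tTrans (X₂ + Y₂)))
      (Ap - tProd (tProd E₂ (tTrans X₂)) Ap - tProd (tProd Ap X₁) (tTrans E₁) +
        tProd (tProd E₂ (Bp + tProd (tProd (tTrans X₂) Ap) X₁)) (tTrans E₁)) := by
  obtain ⟨W₁, rfl⟩ := hX₁
  obtain ⟨W₂, rfl⟩ := hX₂
  rw [isMPInv_iff_bcirc] at hAp hG₁ hG₂ ⊢
  rw [← bcirc_injective.eq_iff] at hY₁ hY₂ hE₁ hE₂ h1 h2 h3 h4 h5 h6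
  simp only [bcirc_tProd, bcirc_tTrans, bcirc_add, bcirc_sub, bcirc_zero] at *
  exact Matrix.isMoorePenroseInv_smwInv hAp ⟨_, rfl⟩ hY₁ ⟨_, rfl⟩ hY₂
    hG₁.isSymm_of_transpose_mul_self hG₂.isSymm_of_transpose_mul_self hE₁ hE₂ h1 h2 h3 h4 h5 h6

theorem smw_formula_mp_inverse (n₁ n₂ n₃ : ℕ) [NeZero n₃]
    (hn₁ : 0 < n₁) (hn₂ : 0 < n₂)
    (A : Fin n₁ → Fin n₁ → ZMod n₃ → ℝ) (Ap : Fin n₁ → Fin n₁ → ZMod n₃ → ℝ)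
    (B : Fin n₂ → Fin n₂ → ZMod n₃ → ℝ) (Bp : Fin n₂ → Fin n₂ → ZMod n₃ → ℝ)
    (X₁ Y₁ X₂ Y₂ : Fin n₁ → Fin n₂ → ZMod n₃ → ℝ)
    (G₁ G₂ : Fin n₂ → Fin n₂ → ZMod n₃ → ℝ)
    (hAp : IsMPInv A Ap) (hBp : IsMPInv B Bp)
    (hX₁ : ∃ W₁ : Fin n₁ → Fin n₂ → ZMod n₃ → ℝ, X₁ = tProd A W₁)
    (hY₁ : tProd (tTrans A) Y₁ = 0)
    (hX₂ : ∃ W₂ : Fin n₁ → Fin n₂ → ZMod n₃ → ℝ, X₂ = tProd (tTrans A) W₂)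
    (hY₂ : tProd A Y₂ = 0)
    (hG₁ : IsMPInv (tProd (tTrans Y₁) Y₁) G₁)
    (hG₂ : IsMPInv (tProd (tTrans Y₂) Y₂) G₂)
    (E₁ E₂ : Fin n₁ → Fin n₂ → ZMod n₃ → ℝ)
    (hE₁ : E₁ = tProd Y₁ G₁) (hE₂ : E₂ = tProd Y₂ G₂)
    (h1 : tProd (tProd (tProd (tProd E₂ Bp) (tTrans E₁)) Y₁) B = E₂)
    (h2 : tProd (tProd (tProd X₁ (tTrans E₁)) Y₁) B = tProd X₁ B)
    (h3 : tProd (tProd Y₁ (tTrans E₁)) Y₁ = Y₁)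
    (h4 : tProd (tProd (tProd (tProd B (tTrans Y₂)) E₂) Bp) (tTrans E₁) = tTrans E₁)
    (h5 : tProd (tProd (tProd B (tTrans Y₂)) E₂) (tTrans X₂) = tProd B (tTrans X₂))
    (h6 : tProd (tProd E₂ (tTrans Y₂)) E₂ = E₂) :
    IsMPInv (A + tProd (tProd (X₁ + Y₁) B) (tTrans (X₂ + Y₂)))
      (Ap - tProd (tProd E₂ (tTrans X₂)) Ap - tProd (tProd Ap X₁) (tTrans E₁) +
        tProd (tProd E₂ (Bp + tProd (tProd (tTrans X₂) Ap) X₁)) (tTrans E₁)) :=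
  smw_formula_mp_inverse_general n₁ n₂ n₃ A Ap B Bp X₁ Y₁ X₂ Y₂ G₁ G₂ hAp hX₁ hY₁ hX₂ hY₂ hG₁ hG₂ E₁
    E₂ hE₁ hE₂ h1 h2 h3 h4 h5 h6
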